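/- arXiv:1412.6185 — 6 statements merged into one kernel-verified Lean document; each statement's English description precedes it below -/
import Mathlib

section
/- Let α > 1/2 be real and let θ ∈ ℝ³ satisfy θ₁+θ₃ > 0, θ₂+θ₃ > 0 and θ₁θ₂+θ₁θ₃+θ₂θ₃ > 0 (i.e. θ lies in the hyperbolicity cone of E₂ containing (1,1,1)). Set K = {σ ∈ ℝ³ : σ₁ ≥ 0, σ₂ ≥ 0, and 2(σ₁σ₂+σ₁σ₃+σ₂σ₃) ≥ σ₁²+σ₂²+σ₃²}. Then (θ₁θ₂+θ₁θ₃+θ₂θ₃)^{−α} = (2^{2−2α}/Γ₂(α)) · ∫_K exp(−θ₁σ₁−θ₂σ₂−θ₃σ₃) · (2(σ₁σ₂+σ₁σ₃+σ₂σ₃) − σ₁²−σ₂²−σ₃²)^{α−3/2} dσ, where Γ₂(α) = π^{1/2} Γ(α) Γ(α−1/2) and the integral is with respect to Lebesgue measure on ℝ³. -/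
/-!
`K` is the image of the cone of positive semidefinite matrices `S = [[x, t], [t, y]]` under the
linear map `(x, t, y) ↦ (x, y, x + 2t + y)` of determinant `-2`. Under this map
`⟨θ, σ⟩ = tr (Θ S)` with `Θ = [[θ₁ + θ₃, θ₃], [θ₃, θ₂ + θ₃]]`, `det Θ = E₂(θ)`, and the
discriminant `2(σ₁σ₂ + σ₁σ₃ + σ₂σ₃) - σ₁² - σ₂² - σ₃²` becomes `4 det S`. So the integral is
`2 · 4^(α - 3/2)` times Siegel's gamma integral `∫_{S ≥ 0} exp (-tr (Θ S)) (det S)^(α - 3/2) dS`,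
which equals `Γ₂(α) (det Θ)^(-α)`: for `x > 0` the constraint on `y` is `y ≥ t²/x` and
`det S = x (y - t²/x)`, so integrating out `y` is a shifted gamma integral, then `t` a gaussian
integral, and finally `x` a gamma integral.
-/

open MeasureTheory Real Set
open scoped ENNReal

lemma lintegral_rpow_sub_mul_exp_neg_mul {s c : ℝ} (hs : 0 < s) (hc : 0 < c) (y₀ : ℝ) :
    ∫⁻ y, ENNReal.ofReal (if y₀ ≤ y then (y - y₀) ^ (s - 1) * exp (-(c * y)) else 0) =
      ENNReal.ofReal (exp (-(c * y₀)) * c ^ (-s) * Gamma s) := by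
  have hΓ : 0 < Gamma s := Gamma_pos_of_pos hs
  rw [← lintegral_add_right_eq_self _ y₀]
  calc _ = ∫⁻ w, ENNReal.ofReal (exp (-(c * y₀)) * c ^ (-s) * Gamma s) *
        ProbabilityTheory.gammaPDF s c w := by
        refine lintegral_congr fun w => ?_
        rw [ProbabilityTheory.gammaPDF_eq, ← ENNReal.ofReal_mul (by positivity)]
        simp only [le_add_iff_nonneg_left, add_sub_cancel_right]
        split_ifs
        · rw [rpow_neg hc.le, mul_add, neg_add, exp_add]
          field_simp
        · simp
    _ = _ := by
        rw [lintegral_const_mul' _ _ ENNReal.ofReal_ne_top,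
          ProbabilityTheory.lintegral_gammaPDF_eq_one hs hc, mul_one]

lemma lintegral_exp_neg_mul_sq_add_mul {p : ℝ} (hp : 0 < p) (q : ℝ) :
    ∫⁻ t, ENNReal.ofReal (exp (-(p * t ^ 2) + q * t)) =
      ENNReal.ofReal (√(π / p) * exp (q ^ 2 / (4 * p))) := by
  have hsq (t : ℝ) : exp (-(p * t ^ 2) + q * t) =
      exp (q ^ 2 / (4 * p)) * exp (-p * (t - q / (2 * p)) ^ 2) := by
    rw [← exp_add]; congr 1; field_simp; ring
  have hgauss : ∫⁻ t, ENNReal.ofReal (exp (-p * t ^ 2)) = ENNReal.ofReal √(π / p) := by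
    rw [← ofReal_integral_eq_lintegral_ofReal (integrable_exp_neg_mul_sq hp)
      (ae_of_all _ fun _ => (exp_pos _).le), integral_gaussian]
  simp_rw [hsq, ENNReal.ofReal_mul (exp_pos _).le]
  rw [lintegral_const_mul' _ _ ENNReal.ofReal_ne_top,
    lintegral_sub_right_eq_self (fun t => ENNReal.ofReal (exp (-p * t ^ 2))), hgauss,
    ← ENNReal.ofReal_mul (exp_pos _).le, mul_comm]

lemma lintegral_comp_linearMap {E : Type*} [NormedAddCommGroup E] [NormedSpace ℝ E]
    [MeasurableSpace E] [BorelSpace E] [FiniteDimensional ℝ E] (μ : Measure E)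
    [μ.IsAddHaarMeasure] {f : E →ₗ[ℝ] E} (hf : LinearMap.det f ≠ 0) {g : E → ℝ≥0∞}
    (hg : Measurable g) :
    ∫⁻ x, g (f x) ∂μ = ENNReal.ofReal |(LinearMap.det f)⁻¹| * ∫⁻ x, g x ∂μ := by
  rw [← lintegral_map hg f.continuous_of_finiteDimensional.measurable,
    Measure.map_linearMap_addHaar_eq_smul_addHaar μ hf, lintegral_smul_measure, smul_eq_mul]

lemma lintegral_fin_succ_cons {n : ℕ} {α : Type*} [MeasureSpace α]
    [SigmaFinite (volume : Measure α)] {f : (Fin (n + 1) → α) → ℝ≥0∞} (hf : Measurable f) :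
    ∫⁻ v, f v = ∫⁻ x, ∫⁻ w, f (Fin.cons x w) := by
  let e := MeasurableEquiv.piFinSuccAbove (fun _ : Fin (n + 1) => α) 0
  rw [← (volume_preserving_piFinSuccAbove (fun _ : Fin (n + 1) => α) 0).symm.lintegral_comp_emb
      e.symm.measurableEmbedding, Measure.volume_eq_prod,
    lintegral_prod (fun p => f (e.symm p)) (hf.comp e.symm.measurable).aemeasurable]
  congr! with x w
  simp [e, MeasurableEquiv.piFinSuccAbove_symm_apply, Fin.insertNthEquiv]

lemma lintegral_fin_three {α : Type*} [MeasureSpace α] [SigmaFinite (volume : Measure α)]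
    {f : (Fin 3 → α) → ℝ≥0∞} (hf : Measurable f) :
    ∫⁻ v, f v = ∫⁻ x, ∫⁻ y, ∫⁻ z, f ![x, y, z] := by
  rw [lintegral_fin_succ_cons hf]
  refine lintegral_congr fun x => ?_
  have hcons : Measurable fun w : Fin 2 → α => (Fin.cons x w : Fin 3 → α) :=
    measurable_pi_lambda _ (Fin.cases measurable_const measurable_pi_apply)
  rw [lintegral_fin_succ_cons (f := fun w => f (Fin.cons x w)) (hf.comp hcons)]
  refine lintegral_congr fun y => ?_
  rw [← (volume_preserving_funUnique (Fin 1) α).lintegral_comp_emb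
    (MeasurableEquiv.measurableEmbedding _)]
  congr! with w
  ext i
  fin_cases i
  rfl

/-- `exp (-tr (Θ S)) (det S) ^ (α - 3/2)` on `S ≥ 0`, at `S = [[x, t], [t, y]]` and
`Θ = [[a, b], [b, c]]`. -/
noncomputable def psdGammaIntegrand (α a b c x t y : ℝ) : ℝ≥0∞ :=
  ENNReal.ofReal (if 0 ≤ x ∧ 0 ≤ y ∧ t ^ 2 ≤ x * y then
    exp (-(a * x + 2 * b * t + c * y)) * (x * y - t ^ 2) ^ (α - 3 / 2) else 0)

section psdGammaIntegrand

variable {α a b c : ℝ}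

lemma lintegral_psdGammaIntegrand_y (hα : 1 / 2 < α) (hc : 0 < c) {x : ℝ} (hx : 0 < x)
    (t : ℝ) :
    ∫⁻ y, psdGammaIntegrand α a b c x t y =
      ENNReal.ofReal (x ^ (α - 3 / 2) * exp (-(a * x + 2 * b * t + c * (t ^ 2 / x))) *
        c ^ (-(α - 1 / 2)) * Gamma (α - 1 / 2)) := by
  have hcond (y : ℝ) : (0 ≤ x ∧ 0 ≤ y ∧ t ^ 2 ≤ x * y) ↔ t ^ 2 / x ≤ y := by
    rw [div_le_iff₀' hx]
    exact ⟨fun h => h.2.2, fun h => ⟨hx.le, by nlinarith [sq_nonneg t], h⟩⟩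
  have hsplit (y : ℝ) : psdGammaIntegrand α a b c x t y =
      ENNReal.ofReal (x ^ (α - 3 / 2) * exp (-(a * x + 2 * b * t))) *
        ENNReal.ofReal (if t ^ 2 / x ≤ y then
          (y - t ^ 2 / x) ^ (α - 1 / 2 - 1) * exp (-(c * y)) else 0) := by
    rw [psdGammaIntegrand, ← ENNReal.ofReal_mul (by positivity), if_congr (hcond y) rfl rfl]
    congr 1
    split_ifs with hy
    · rw [show x * y - t ^ 2 = x * (y - t ^ 2 / x) by field_simp,
        mul_rpow hx.le (sub_nonneg.2 hy), show α - 1 / 2 - 1 = α - 3 / 2 by ring,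
        show -(a * x + 2 * b * t + c * y) = -(a * x + 2 * b * t) + -(c * y) by ring, exp_add]
      ring
    · simp
  simp_rw [hsplit]
  rw [lintegral_const_mul' _ _ ENNReal.ofReal_ne_top,
    lintegral_rpow_sub_mul_exp_neg_mul (by linarith) hc, ← ENNReal.ofReal_mul (by positivity),
    show -(a * x + 2 * b * t + c * (t ^ 2 / x)) = -(a * x + 2 * b * t) + -(c * (t ^ 2 / x)) by
      ring, exp_add]
  congr 1
  ring

lemma lintegral_psdGammaIntegrand_ty (hα : 1 / 2 < α) (hc : 0 < c) {x : ℝ} (hx : 0 < x) :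
    ∫⁻ t, ∫⁻ y, psdGammaIntegrand α a b c x t y =
      ENNReal.ofReal (√π * c ^ (-α) * Gamma (α - 1 / 2) *
        (x ^ (α - 1) * exp (-((a * c - b ^ 2) / c * x)))) := by
  have hΓ : 0 < Gamma (α - 1 / 2) := Gamma_pos_of_pos (by linarith)
  set C := x ^ (α - 3 / 2) * exp (-(a * x)) * c ^ (-(α - 1 / 2)) * Gamma (α - 1 / 2) with hC
  have hsplit (t : ℝ) : x ^ (α - 3 / 2) * exp (-(a * x + 2 * b * t + c * (t ^ 2 / x))) *
      c ^ (-(α - 1 / 2)) * Gamma (α - 1 / 2) = C * exp (-(c / x * t ^ 2) + -(2 * b) * t) := by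
    rw [show -(a * x + 2 * b * t + c * (t ^ 2 / x)) =
      -(a * x) + (-(c / x * t ^ 2) + -(2 * b) * t) by ring, exp_add, hC]
    ring
  have hC0 : 0 ≤ C := by positivity
  simp_rw [lintegral_psdGammaIntegrand_y hα hc hx, hsplit, ENNReal.ofReal_mul hC0]
  rw [lintegral_const_mul' _ _ ENNReal.ofReal_ne_top,
    lintegral_exp_neg_mul_sq_add_mul (by positivity), ← ENNReal.ofReal_mul (by positivity)]
  congr 1
  have hsqrt : √(π / (c / x)) = √π * √x / √c := by
    rw [div_div_eq_mul_div, sqrt_div' _ hc.le, sqrt_mul pi_pos.le]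
  have hx' : x ^ (α - 3 / 2) * √x = x ^ (α - 1) := by
    rw [sqrt_eq_rpow, ← rpow_add hx]; congr 1; ring
  have hc' : c ^ (-(α - 1 / 2)) = c ^ (-α) * √c := by
    rw [sqrt_eq_rpow, ← rpow_add hc]; congr 1; ring
  have hexp : exp (-(a * x)) * exp ((-(2 * b)) ^ 2 / (4 * (c / x))) =
      exp (-((a * c - b ^ 2) / c * x)) := by
    rw [← exp_add]; congr 1; field_simp; ring
  rw [hC, hsqrt, hc', ← hx', ← hexp]
  have : 0 < √c := sqrt_pos.2 hc
  field_simp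

lemma lintegral_psdGammaIntegrand (hα : 1 / 2 < α) (hc : 0 < c) (hdet : 0 < a * c - b ^ 2) :
    ∫⁻ x, ∫⁻ t, ∫⁻ y, psdGammaIntegrand α a b c x t y =
      ENNReal.ofReal (√π * Gamma α * Gamma (α - 1 / 2) * (a * c - b ^ 2) ^ (-α)) := by
  have hΓ : 0 < Gamma (α - 1 / 2) := Gamma_pos_of_pos (by linarith)
  have hd : 0 < (a * c - b ^ 2) / c := by positivity
  have hgamma := lintegral_rpow_sub_mul_exp_neg_mul (by linarith : 0 < α) hd 0
  simp only [sub_zero, mul_zero, neg_zero, exp_zero, one_mul] at hgamma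
  calc _ = ∫⁻ x, ENNReal.ofReal (√π * c ^ (-α) * Gamma (α - 1 / 2)) *
        ENNReal.ofReal (if 0 ≤ x then x ^ (α - 1) * exp (-((a * c - b ^ 2) / c * x)) else 0) := by
        refine lintegral_congr_ae ?_
        filter_upwards [Measure.ae_ne volume 0] with x hx0
        rcases hx0.lt_or_gt with hneg | hpos
        · simp [psdGammaIntegrand, hneg.not_ge]
        · rw [lintegral_psdGammaIntegrand_ty hα hc hpos, if_pos hpos.le,
            ← ENNReal.ofReal_mul (by positivity)]
    _ = _ := by
        rw [lintegral_const_mul' _ _ ENNReal.ofReal_ne_top, hgamma,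
          ← ENNReal.ofReal_mul (by positivity), div_rpow hdet.le hc.le]
        have : 0 < c ^ (-α) := rpow_pos_of_pos hc _
        field_simp

end psdGammaIntegrand

noncomputable def e2DualConeParam : (Fin 3 → ℝ) →ₗ[ℝ] Fin 3 → ℝ :=
  Matrix.toLin' !![1, 0, 0; 0, 0, 1; 1, 2, 1]

lemma e2DualConeParam_apply (x t y : ℝ) :
    e2DualConeParam ![x, t, y] = ![x, y, x + 2 * t + y] := by
  ext i
  fin_cases i <;> simp [e2DualConeParam, Matrix.mulVec, add_assoc]

lemma det_e2DualConeParam : LinearMap.det e2DualConeParam = -2 := by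
  rw [e2DualConeParam, LinearMap.det_toLin', Matrix.det_fin_three]
  simp

def e2DualCone : Set (Fin 3 → ℝ) :=
  {σ | 0 ≤ σ 0 ∧ 0 ≤ σ 1 ∧ σ 0 ^ 2 + σ 1 ^ 2 + σ 2 ^ 2 ≤ 2 * (σ 0 * σ 1 + σ 0 * σ 2 + σ 1 * σ 2)}

def e2Discr (σ : Fin 3 → ℝ) : ℝ :=
  2 * (σ 0 * σ 1 + σ 0 * σ 2 + σ 1 * σ 2) - σ 0 ^ 2 - σ 1 ^ 2 - σ 2 ^ 2

lemma measurableSet_e2DualCone : MeasurableSet e2DualCone := by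
  unfold e2DualCone
  measurability

lemma mem_e2DualCone_iff {σ : Fin 3 → ℝ} :
    σ ∈ e2DualCone ↔ 0 ≤ σ 0 ∧ 0 ≤ σ 1 ∧ 0 ≤ e2Discr σ := by
  simp only [e2DualCone, e2Discr, mem_ofPred_eq]
  constructor <;> rintro ⟨h0, h1, h⟩ <;> exact ⟨h0, h1, by linarith⟩

lemma e2Discr_e2DualConeParam (x t y : ℝ) :
    e2Discr (e2DualConeParam ![x, t, y]) = 4 * (x * y - t ^ 2) := by
  rw [e2DualConeParam_apply, e2Discr]
  simp only [Matrix.cons_val_zero, Matrix.cons_val_one, Matrix.cons_val]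
  ring

lemma indicator_e2DualCone_comp_e2DualConeParam (α θ₁ θ₂ θ₃ x t y : ℝ) :
    e2DualCone.indicator (fun σ => ENNReal.ofReal
        (exp (-(θ₁ * σ 0 + θ₂ * σ 1 + θ₃ * σ 2)) * e2Discr σ ^ (α - 3 / 2)))
      (e2DualConeParam ![x, t, y]) =
    ENNReal.ofReal (4 ^ (α - 3 / 2)) * psdGammaIntegrand α (θ₁ + θ₃) θ₃ (θ₂ + θ₃) x t y := by
  classical
  set σ := e2DualConeParam ![x, t, y]
  have hσ : σ 0 = x ∧ σ 1 = y ∧ σ 2 = x + 2 * t + y := by simp [σ, e2DualConeParam_apply]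
  have hdiscr : e2Discr σ = 4 * (x * y - t ^ 2) := e2Discr_e2DualConeParam x t y
  have hcone : σ ∈ e2DualCone ↔ 0 ≤ x ∧ 0 ≤ y ∧ t ^ 2 ≤ x * y := by
    rw [mem_e2DualCone_iff, hσ.1, hσ.2.1, hdiscr]
    constructor <;> rintro ⟨hx, hy, h⟩ <;> exact ⟨hx, hy, by linarith⟩
  rw [indicator_apply, psdGammaIntegrand, ← ENNReal.ofReal_mul (by positivity),
    if_congr hcone rfl rfl]
  split_ifs with h
  · rw [hdiscr, mul_rpow (by norm_num) (by linarith [h.2.2]), hσ.1, hσ.2.1, hσ.2.2]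
    ring_nf
  · simp

lemma lintegral_e2DualCone {α θ₁ θ₂ θ₃ : ℝ} (hα : 1 / 2 < α) (h23 : 0 < θ₂ + θ₃)
    (hE2 : 0 < θ₁ * θ₂ + θ₁ * θ₃ + θ₂ * θ₃) :
    ∫⁻ σ in e2DualCone, ENNReal.ofReal
        (exp (-(θ₁ * σ 0 + θ₂ * σ 1 + θ₃ * σ 2)) * e2Discr σ ^ (α - 3 / 2)) =
      ENNReal.ofReal (2 ^ (2 * α - 2) * (√π * Gamma α * Gamma (α - 1 / 2) *
        (θ₁ * θ₂ + θ₁ * θ₃ + θ₂ * θ₃) ^ (-α))) := by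
  set g := e2DualCone.indicator (fun σ => ENNReal.ofReal
    (exp (-(θ₁ * σ 0 + θ₂ * σ 1 + θ₃ * σ 2)) * e2Discr σ ^ (α - 3 / 2)))
  have hg : Measurable g :=
    (Measurable.ennreal_ofReal (by unfold e2Discr; fun_prop)).indicator measurableSet_e2DualCone
  have hdet : LinearMap.det e2DualConeParam ≠ 0 := by rw [det_e2DualConeParam]; norm_num
  have hE2' : θ₁ * θ₂ + θ₁ * θ₃ + θ₂ * θ₃ = (θ₁ + θ₃) * (θ₂ + θ₃) - θ₃ ^ 2 := by ring
  calc _ = ∫⁻ σ, g σ := (lintegral_indicator measurableSet_e2DualCone _).symm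
    _ = 2 * ∫⁻ v, g (e2DualConeParam v) := by
        rw [lintegral_comp_linearMap volume hdet hg, det_e2DualConeParam, abs_inv, abs_neg,
          abs_two, ENNReal.ofReal_inv_of_pos two_pos, ENNReal.ofReal_ofNat, ← mul_assoc,
          ENNReal.mul_inv_cancel two_ne_zero ENNReal.ofNat_ne_top, one_mul]
    _ = 2 * ∫⁻ x, ∫⁻ t, ∫⁻ y,
          ENNReal.ofReal (4 ^ (α - 3 / 2)) * psdGammaIntegrand α (θ₁ + θ₃) θ₃ (θ₂ + θ₃) x t y := by
        have hgA : Measurable fun v => g (e2DualConeParam v) :=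
          hg.comp e2DualConeParam.continuous_of_finiteDimensional.measurable
        rw [lintegral_fin_three hgA]
        simp_rw [g, indicator_e2DualCone_comp_e2DualConeParam]
    _ = _ := by
        have hΓ : 0 < Gamma α := Gamma_pos_of_pos (by linarith)
        have hΓ' : 0 < Gamma (α - 1 / 2) := Gamma_pos_of_pos (by linarith)
        have h4 : (2 : ℝ) * 4 ^ (α - 3 / 2) = 2 ^ (2 * α - 2) := by
          rw [show (4 : ℝ) = 2 ^ (2 : ℝ) by norm_num, ← rpow_mul zero_le_two,
            show 2 * α - 2 = 1 + 2 * (α - 3 / 2) by ring, rpow_add two_pos, rpow_one]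
        simp only [lintegral_const_mul', ENNReal.ofReal_ne_top, ne_eq, not_false_eq_true]
        rw [lintegral_psdGammaIntegrand hα h23 (hE2' ▸ hE2), ← hE2', ← ENNReal.ofReal_mul
          (by positivity), ← ENNReal.ofReal_ofNat 2, ← ENNReal.ofReal_mul zero_le_two, ← mul_assoc,
          h4]

lemma integral_e2DualCone {α θ₁ θ₂ θ₃ : ℝ} (hα : 1 / 2 < α) (h23 : 0 < θ₂ + θ₃)
    (hE2 : 0 < θ₁ * θ₂ + θ₁ * θ₃ + θ₂ * θ₃) :
    ∫ σ in e2DualCone, exp (-(θ₁ * σ 0 + θ₂ * σ 1 + θ₃ * σ 2)) * e2Discr σ ^ (α - 3 / 2) =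
      2 ^ (2 * α - 2) * (√π * Gamma α * Gamma (α - 1 / 2) *
        (θ₁ * θ₂ + θ₁ * θ₃ + θ₂ * θ₃) ^ (-α)) := by
  have hΓ : 0 < Gamma α := Gamma_pos_of_pos (by linarith)
  have hΓ' : 0 < Gamma (α - 1 / 2) := Gamma_pos_of_pos (by linarith)
  rw [integral_eq_lintegral_of_nonneg_ae, lintegral_e2DualCone hα h23 hE2,
    ENNReal.toReal_ofReal (by positivity)]
  · exact (ae_restrict_iff' measurableSet_e2DualCone).2 <| ae_of_all _ fun σ hσ =>
      mul_nonneg (exp_pos _).le (rpow_nonneg (mem_e2DualCone_iff.1 hσ).2.2 _)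
  · unfold e2Discr
    fun_prop

theorem stmt4_general (α : ℝ) (hα : 1 / 2 < α) (θ₁ θ₂ θ₃ : ℝ)
    (h23 : 0 < θ₂ + θ₃)
    (hE2 : 0 < θ₁ * θ₂ + θ₁ * θ₃ + θ₂ * θ₃) :
    (θ₁ * θ₂ + θ₁ * θ₃ + θ₂ * θ₃) ^ (-α) =
      (2 : ℝ) ^ (2 - 2 * α) / (Real.pi ^ (1 / 2 : ℝ) * Real.Gamma α * Real.Gamma (α - 1 / 2)) *
        ∫ σ in {σ : Fin 3 → ℝ | 0 ≤ σ 0 ∧ 0 ≤ σ 1 ∧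
            σ 0 ^ 2 + σ 1 ^ 2 + σ 2 ^ 2 ≤ 2 * (σ 0 * σ 1 + σ 0 * σ 2 + σ 1 * σ 2)},
          Real.exp (-(θ₁ * σ 0 + θ₂ * σ 1 + θ₃ * σ 2)) *
            (2 * (σ 0 * σ 1 + σ 0 * σ 2 + σ 1 * σ 2) -
              σ 0 ^ 2 - σ 1 ^ 2 - σ 2 ^ 2) ^ (α - 3 / 2) := by
  have hΓ : 0 < Gamma α := Gamma_pos_of_pos (by linarith)
  have hΓ' : 0 < Gamma (α - 1 / 2) := Gamma_pos_of_pos (by linarith)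
  have hK := integral_e2DualCone hα h23 hE2
  unfold e2DualCone e2Discr at hK
  have h2 : (2 : ℝ) ^ (2 - 2 * α) * 2 ^ (2 * α - 2) = 1 := by
    rw [← rpow_add two_pos]; norm_num
  rw [hK, ← sqrt_eq_rpow, div_mul_eq_mul_div, ← mul_assoc, h2, one_mul,
    mul_div_cancel_left₀ _ (by positivity)]

/-- The Riesz kernel of `E₂(θ) = θ₁θ₂+θ₁θ₃+θ₂θ₃` in three variables: for `α > 1/2` and
`θ` in the hyperbolicity cone of `E₂` containing `(1,1,1)`,
`E₂(θ)^{-α} = (2^{2-2α}/Γ₂(α)) ∫_K exp(-⟨θ,σ⟩)(2(σ₁σ₂+σ₁σ₃+σ₂σ₃)-σ₁²-σ₂²-σ₃²)^{α-3/2} dσ`,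
where `K = {σ : σ₁ ≥ 0, σ₂ ≥ 0, 2(σ₁σ₂+σ₁σ₃+σ₂σ₃) ≥ σ₁²+σ₂²+σ₃²}` and
`Γ₂(α) = π^{1/2} Γ(α) Γ(α-1/2)`. -/
theorem stmt4 (α : ℝ) (hα : 1 / 2 < α) (θ₁ θ₂ θ₃ : ℝ)
    (h13 : 0 < θ₁ + θ₃) (h23 : 0 < θ₂ + θ₃)
    (hE2 : 0 < θ₁ * θ₂ + θ₁ * θ₃ + θ₂ * θ₃) :
    (θ₁ * θ₂ + θ₁ * θ₃ + θ₂ * θ₃) ^ (-α) =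
      (2 : ℝ) ^ (2 - 2 * α) / (Real.pi ^ (1 / 2 : ℝ) * Real.Gamma α * Real.Gamma (α - 1 / 2)) *
        ∫ σ in {σ : Fin 3 → ℝ | 0 ≤ σ 0 ∧ 0 ≤ σ 1 ∧
            σ 0 ^ 2 + σ 1 ^ 2 + σ 2 ^ 2 ≤ 2 * (σ 0 * σ 1 + σ 0 * σ 2 + σ 1 * σ 2)},
          Real.exp (-(θ₁ * σ 0 + θ₂ * σ 1 + θ₃ * σ 2)) *
            (2 * (σ 0 * σ 1 + σ 0 * σ 2 + σ 1 * σ 2) -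
              σ 0 ^ 2 - σ 1 ^ 2 - σ 2 ^ 2) ^ (α - 3 / 2) :=
  stmt4_general α hα θ₁ θ₂ θ₃ h23 hE2
end

section
/- Let K ⊆ ℝ^d be a nonempty closed convex cone, let K^∨ = {θ ∈ ℝ^d : ⟨θ,σ⟩ ≥ 0 for all σ ∈ K} be its dual cone, and let 𝓛 ⊆ ℝ^d be a linear subspace such that 𝓛 intersects the interior of K^∨. Let π be the orthogonal projection of ℝ^d onto 𝓛. Then π(K) = {σ ∈ 𝓛 : ⟨θ,σ⟩ ≥ 0 for all θ ∈ K^∨ ∩ 𝓛}; that is, the image of K under π equals the dual cone, computed inside the subspace 𝓛 with its induced inner product, of the cone K^∨ ∩ 𝓛. In particular π(K) is closed. -/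
/-!
By Farkas' lemma (`ProperCone.relative_hyperplane_separation`), the closure of the image of a
proper cone `K` under the orthogonal projection `π` onto `𝓛`, whose adjoint is the inclusion
`𝓛 → ℝ^d`, is the inner dual of `K^∨ ∩ 𝓛` in `𝓛`. So everything hinges on `π(K)` being closed.
A point `θ₀ ∈ 𝓛 ∩ int K^∨` satisfies `c ‖σ‖ ≤ ⟪θ₀, σ⟫` on `K` for some `c > 0`, and
`⟪θ₀, π σ⟫ = ⟪θ₀, σ⟫`; hence the part of `K` lying over a sublevel set of `⟪θ₀, ·⟫` on `𝓛` is
compact, and `π(K)` is closed.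
-/

open scoped RealInnerProductSpace
open Set Metric

section Cone

variable {E : Type*} [AddCommGroup E] [Module ℝ E] {K : Set E}

lemma add_mem_of_convex_of_smul_mem (hconv : Convex ℝ K)
    (hcone : ∀ σ ∈ K, ∀ t : ℝ, 0 < t → t • σ ∈ K) {σ τ : E} (hσ : σ ∈ K) (hτ : τ ∈ K) :
    σ + τ ∈ K := by
  have hmid : (2⁻¹ : ℝ) • σ + (2⁻¹ : ℝ) • τ ∈ K :=
    hconv hσ hτ (by norm_num) (by norm_num) (by norm_num)
  simpa [smul_add, smul_smul] using hcone _ hmid 2 two_pos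

lemma zero_mem_of_isClosed_of_smul_mem [TopologicalSpace E] [ContinuousSMul ℝ E]
    (hne : K.Nonempty) (hclosed : IsClosed K)
    (hcone : ∀ σ ∈ K, ∀ t : ℝ, 0 < t → t • σ ∈ K) : (0 : E) ∈ K := by
  obtain ⟨σ, hσ⟩ := hne
  have h0 : (0 : ℝ) ∈ closure (Ioi 0) := by simp [closure_Ioi]
  simpa [hclosed.closure_eq] using
    map_mem_closure (continuous_id.smul continuous_const) h0 fun t ht => hcone σ hσ t ht

variable [TopologicalSpace E] [ContinuousSMul ℝ E]

def ProperCone.ofIsClosed (hne : K.Nonempty) (hclosed : IsClosed K) (hconv : Convex ℝ K)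
    (hcone : ∀ σ ∈ K, ∀ t : ℝ, 0 < t → t • σ ∈ K) : ProperCone ℝ E where
  carrier := K
  add_mem' := add_mem_of_convex_of_smul_mem hconv hcone
  zero_mem' := zero_mem_of_isClosed_of_smul_mem hne hclosed hcone
  smul_mem' := by
    rintro ⟨t, ht⟩ σ hσ
    rcases ht.eq_or_lt with rfl | ht
    · simpa using zero_mem_of_isClosed_of_smul_mem hne hclosed hcone
    · exact hcone σ hσ t ht
  isClosed' := hclosed

@[simp] lemma ProperCone.coe_ofIsClosed (hne : K.Nonempty) (hclosed : IsClosed K)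
    (hconv : Convex ℝ K) (hcone : ∀ σ ∈ K, ∀ t : ℝ, 0 < t → t • σ ∈ K) :
    (ProperCone.ofIsClosed hne hclosed hconv hcone : Set E) = K := rfl

end Cone

section

variable {E : Type*} [NormedAddCommGroup E] [InnerProductSpace ℝ E] {K : Set E} {θ₀ : E}

lemma exists_mul_norm_le_inner_of_mem_interior_dual
    (hθ₀ : θ₀ ∈ interior {θ | ∀ σ ∈ K, 0 ≤ ⟪θ, σ⟫}) :
    ∃ c > 0, ∀ σ ∈ K, c * ‖σ‖ ≤ ⟪θ₀, σ⟫ := by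
  obtain ⟨ε, hε, hball⟩ := isOpen_iff.1 isOpen_interior θ₀ hθ₀
  refine ⟨ε / 2, half_pos hε, fun σ hσ => ?_⟩
  rcases eq_or_ne σ 0 with rfl | hσ0
  · simp
  have hσn : 0 < ‖σ‖ := norm_pos_iff.2 hσ0
  -- `θ₀` moved by `ε / 2` against the direction of `σ` stays in the dual cone
  have hmem : θ₀ - (ε / 2 / ‖σ‖) • σ ∈ {θ | ∀ σ ∈ K, 0 ≤ ⟪θ, σ⟫} := by
    refine interior_subset (hball ?_)
    rw [mem_ball, dist_eq_norm, sub_sub_cancel_left, norm_neg, norm_smul, Real.norm_eq_abs,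
      abs_of_pos (by positivity), div_mul_cancel₀ _ hσn.ne']
    exact half_lt_self hε
  have h := hmem σ hσ
  rw [inner_sub_left, real_inner_smul_left, real_inner_self_eq_norm_sq, sq, ← mul_assoc,
    div_mul_cancel₀ _ hσn.ne'] at h
  linarith

end

section

variable {E F : Type*} [MetricSpace E] [ProperSpace E] [TopologicalSpace F] [T2Space F]

lemma IsClosed.image_of_isBounded_sublevel {K : Set E} (hK : IsClosed K) {f : E → F}
    (hf : Continuous f) {ℓ : F → ℝ} (hℓ : Continuous ℓ)
    (hbdd : ∀ M, Bornology.IsBounded (K ∩ {σ | ℓ (f σ) ≤ M})) : IsClosed (f '' K) := by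
  refine isClosed_of_closure_subset fun y hy => ?_
  set M := ℓ y + 1
  have hcpt : IsCompact (K ∩ {σ | ℓ (f σ) ≤ M}) :=
    (hbdd M).isCompact_closure.of_isClosed_subset
      (hK.inter (_root_.isClosed_le (hℓ.comp hf) continuous_const)) subset_closure
  have hsub : {z | ℓ z < M} ∩ f '' K ⊆ f '' (K ∩ {σ | ℓ (f σ) ≤ M}) := by
    rintro _ ⟨hz, σ, hσ, rfl⟩
    exact ⟨σ, ⟨hσ, (show ℓ (f σ) < M from hz).le⟩, rfl⟩
  have hy' : y ∈ closure (f '' (K ∩ {σ | ℓ (f σ) ≤ M})) :=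
    closure_mono hsub ((isOpen_lt hℓ continuous_const).inter_closure ⟨by simp [M], hy⟩)
  rw [(hcpt.image hf).isClosed.closure_eq] at hy'
  exact image_mono inter_subset_left hy'

end

section

variable {E F : Type*} [NormedAddCommGroup E] [InnerProductSpace ℝ E] [CompleteSpace E]
  [NormedAddCommGroup F] [InnerProductSpace ℝ F] [CompleteSpace F]

lemma ProperCone.image_eq_setOf_adjoint_mem_innerDual {C : ProperCone ℝ E} {f : E →L[ℝ] F}
    (hclosed : IsClosed (f '' C)) :
    f '' C = {b | ∀ y, ContinuousLinearMap.adjoint f y ∈ innerDual (C : Set E) → 0 ≤ ⟪b, y⟫} := by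
  ext b
  rw [mem_ofPred_eq, ← C.relative_hyperplane_separation, ← hclosed.closure_eq]
  rfl

end

/-- Let `K ⊆ ℝ^d` be a nonempty closed convex cone with dual cone
`K^∨ = {θ : ⟨θ,σ⟩ ≥ 0 ∀ σ ∈ K}`, and let `𝓛` be a linear subspace meeting the interior
of `K^∨`. Then the image of `K` under the orthogonal projection `π` onto `𝓛` equals the
dual cone, computed inside `𝓛`, of `K^∨ ∩ 𝓛`; in particular `π(K)` is closed. -/
theorem stmt6 {d : ℕ} (K : Set (EuclideanSpace ℝ (Fin d)))
    (hKne : K.Nonempty) (hKclosed : IsClosed K) (hKconv : Convex ℝ K)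
    (hKcone : ∀ σ ∈ K, ∀ t : ℝ, 0 < t → t • σ ∈ K)
    (Kdual : Set (EuclideanSpace ℝ (Fin d)))
    (hKdual : Kdual = {θ | ∀ σ ∈ K, 0 ≤ ⟪θ, σ⟫})
    (𝓛 : Submodule ℝ (EuclideanSpace ℝ (Fin d)))
    (h𝓛 : ((𝓛 : Set (EuclideanSpace ℝ (Fin d))) ∩ interior Kdual).Nonempty) :
    (fun x => Submodule.orthogonalProjectionOnto 𝓛 x) '' K =
      {σ : 𝓛 | ∀ θ : 𝓛, (θ : EuclideanSpace ℝ (Fin d)) ∈ Kdual → 0 ≤ ⟪θ, σ⟫} ∧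
    IsClosed ((fun x => Submodule.orthogonalProjectionOnto 𝓛 x) '' K) := by
  subst hKdual
  obtain ⟨θ₀, hθ₀𝓛, hθ₀⟩ := h𝓛
  obtain ⟨c, hc, hcoercive⟩ := exists_mul_norm_le_inner_of_mem_interior_dual hθ₀
  have hclosed : IsClosed (𝓛.orthogonalProjectionOnto '' K) := by
    refine hKclosed.image_of_isBounded_sublevel (𝓛.orthogonalProjectionOnto).continuous
      (innerSL ℝ (⟨θ₀, hθ₀𝓛⟩ : 𝓛)).continuous fun M => ?_
    refine (isBounded_closedBall (x := 0) (r := M / c)).subset fun σ ⟨hσ, hM⟩ => ?_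
    rw [mem_closedBall, dist_zero_right, le_div_iff₀ hc, mul_comm]
    rw [mem_ofPred_eq, innerSL_apply_apply,
      Submodule.inner_orthogonalProjectionOnto_eq_of_mem_left] at hM
    exact (hcoercive σ hσ).trans hM
  refine ⟨?_, hclosed⟩
  rw [← ProperCone.coe_ofIsClosed hKne hKclosed hKconv hKcone] at hclosed ⊢
  rw [ProperCone.image_eq_setOf_adjoint_mem_innerDual hclosed]
  simp [Submodule.adjoint_orthogonalProjectionOnto, real_inner_comm]
end

section
/- Let d ≥ 1 and 1 ≤ m ≤ d, and let e_m denote the elementary symmetric polynomial of degree m in the variables θ₁,…,θ_d. If θ ∈ ℂ^d has all coordinates nonzero (θ_i ≠ 0 for every i), then at least one partial derivative of e_m is nonzero at θ; that is, the system of equations (∂e_m/∂θ_1)(θ) = ⋯ = (∂e_m/∂θ_d)(θ) = 0 has no solution with all coordinates nonzero. -/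
/-!
If all `∂ᵢ e_{k+1}` vanish at `θ`, evaluating `e_k = ∂ᵢ e_{k+1} + Xᵢ ∂ᵢ e_k` gives
`e_k(θ) = θᵢ ∂ᵢ e_k(θ)` for every `i`; summing over `i` and using Euler's identity for the
homogeneous `e_k` yields `d e_k(θ) = k e_k(θ)`, so `e_k(θ) = 0` when `k ≠ d`, and then
`∂ᵢ e_k(θ) = 0` because `θᵢ ≠ 0`. Descending from `k = m - 1` to `k = 0` would force
`e_0(θ) = 0`, whereas `e_0 = 1`.
-/

open MvPolynomial Finset

namespace MvPolynomial

section CommSemiring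

variable {σ R : Type*} [CommSemiring R]

theorem pderiv_prod_X_of_notMem {i : σ} {s : Finset σ} (hi : i ∉ s) :
    pderiv i (∏ j ∈ s, X j : MvPolynomial σ R) = 0 := by
  refine prod_induction _ (fun p ↦ pderiv i p = 0) (fun p q hp hq ↦ ?_) pderiv_one
    fun j hj ↦ pderiv_X_of_ne (ne_of_mem_of_not_mem hj hi)
  simp [hp, hq]

theorem pderiv_prod_X [DecidableEq σ] (i : σ) (s : Finset σ) :
    pderiv i (∏ j ∈ s, X j : MvPolynomial σ R) =
      if i ∈ s then ∏ j ∈ s.erase i, X j else 0 := by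
  split_ifs with hi
  · rw [← mul_prod_erase s _ hi, pderiv_mul, pderiv_X_self,
      pderiv_prod_X_of_notMem (notMem_erase i s)]
    simp
  · exact pderiv_prod_X_of_notMem hi

variable [Fintype σ]

theorem pderiv_esymm [DecidableEq σ] (i : σ) (k : ℕ) :
    pderiv i (esymm σ R k) = ∑ s ∈ powersetCard k univ with i ∈ s, ∏ j ∈ s.erase i, X j := by
  simp only [esymm, map_sum, pderiv_prod_X, sum_filter]

theorem esymm_eq_pderiv_esymm_succ_add_X_mul_pderiv_esymm (i : σ) (k : ℕ) :
    esymm σ R k = pderiv i (esymm σ R (k + 1)) + X i * pderiv i (esymm σ R k) := by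
  classical
  rw [pderiv_esymm, pderiv_esymm, mul_sum, esymm,
    ← sum_filter_not_add_sum_filter (powersetCard k univ) (i ∈ ·)]
  congr 1
  · refine sum_nbij' (insert i) (erase · i) ?_ ?_ ?_ ?_ ?_ <;>
      simp only [mem_filter, mem_powersetCard_univ, and_imp]
    · intro t ht hi
      exact ⟨by rw [card_insert_of_notMem hi, ht], mem_insert_self i t⟩
    · intro s hs hi
      exact ⟨by rw [card_erase_of_mem hi, hs, Nat.add_sub_cancel], notMem_erase i s⟩
    · exact fun t _ hi ↦ erase_insert hi
    · exact fun s _ hi ↦ insert_erase hi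
    · exact fun t _ hi ↦ by rw [erase_insert hi]
  · exact sum_congr rfl fun s hs ↦ (mul_prod_erase s _ (mem_filter.mp hs).2).symm

theorem isHomogeneous_esymm (k : ℕ) : (esymm σ R k).IsHomogeneous k :=
  IsHomogeneous.sum _ _ _ fun s hs ↦ by
    simpa [mem_powersetCard_univ.mp hs] using
      IsHomogeneous.prod s _ (fun _ ↦ 1) fun j _ ↦ isHomogeneous_X R j

end CommSemiring

section Domain

variable {σ R : Type*} [Fintype σ] [CommRing R] [IsDomain R] [CharZero R]

theorem eval_esymm_eq_zero_of_eval_pderiv_esymm_succ_eq_zero {θ : σ → R} {k : ℕ}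
    (hk : k ≠ Fintype.card σ) (h : ∀ i, eval θ (pderiv i (esymm σ R (k + 1))) = 0) :
    eval θ (esymm σ R k) = 0 := by
  have hrec (i : σ) : eval θ (esymm σ R k) = θ i * eval θ (pderiv i (esymm σ R k)) := by
    simpa [h i] using congrArg (eval θ) (esymm_eq_pderiv_esymm_succ_add_X_mul_pderiv_esymm i k)
  have heuler := congrArg (eval θ) (isHomogeneous_esymm (σ := σ) (R := R) k).sum_X_mul_pderiv
  simp only [map_sum, map_mul, eval_X, ← hrec, sum_const, card_univ, nsmul_eq_mul, map_natCast]
    at heuler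
  exact (mul_eq_mul_right_iff.mp heuler).resolve_left (by exact_mod_cast hk.symm)

theorem eval_pderiv_esymm_eq_zero_of_le {θ : σ → R} (hθ : ∀ i, θ i ≠ 0) {m : ℕ}
    (hm : m ≤ Fintype.card σ) (h : ∀ i, eval θ (pderiv i (esymm σ R m)) = 0) :
    ∀ k ≤ m, ∀ i, eval θ (pderiv i (esymm σ R k)) = 0 := by
  induction m with
  | zero => simp
  | succ m ih =>
    have hesymm := eval_esymm_eq_zero_of_eval_pderiv_esymm_succ_eq_zero (by omega) h
    intro k hk
    obtain hk | rfl := Nat.le_succ_iff.mp hk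
    · refine ih (by omega) (fun i ↦ ?_) k hk
      have := congrArg (eval θ) (esymm_eq_pderiv_esymm_succ_add_X_mul_pderiv_esymm i m)
      simpa [hesymm, h i, hθ i] using this.symm
    · exact h

end Domain

end MvPolynomial

theorem stmt10_general {d m : ℕ} (hm1 : 1 ≤ m) (hmd : m ≤ d)
    (θ : Fin d → ℂ) (hθ : ∀ i, θ i ≠ 0) :
    ∃ i, MvPolynomial.eval θ
      (MvPolynomial.pderiv i (MvPolynomial.esymm (Fin d) ℂ m)) ≠ 0 := by
  by_contra! h
  have hpderiv_one := eval_pderiv_esymm_eq_zero_of_le hθ (by rwa [Fintype.card_fin]) h 1 hm1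
  have hd0 : 0 ≠ Fintype.card (Fin d) := by rw [Fintype.card_fin]; omega
  simpa using eval_esymm_eq_zero_of_eval_pderiv_esymm_succ_eq_zero hd0 hpderiv_one

/-- The partial derivatives of the elementary symmetric polynomial `e_m` in `d` variables
(`1 ≤ m ≤ d`) have no common zero with all coordinates nonzero: if every `θ i ≠ 0`, then
some partial derivative of `e_m` is nonzero at `θ`. -/
theorem stmt10 {d m : ℕ} (hd : 1 ≤ d) (hm1 : 1 ≤ m) (hmd : m ≤ d)
    (θ : Fin d → ℂ) (hθ : ∀ i, θ i ≠ 0) :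
    ∃ i, MvPolynomial.eval θ
      (MvPolynomial.pderiv i (MvPolynomial.esymm (Fin d) ℂ m)) ≠ 0 :=
  stmt10_general hm1 hmd θ hθ
end

section
/- Let n ≥ 1 and 1 ≤ k ≤ n be integers. The Lebesgue volume of the set {x ∈ ℝ^n : 0 ≤ x_i ≤ 1 for all i, and k−1 ≤ x_1+⋯+x_n ≤ k} equals A(n, k−1)/n!, where A(n, j) is the Eulerian number, i.e. the number of permutations σ of {0,1,…,n−1} having exactly j ascents (an ascent of σ being an index 0 ≤ i < n−1 with σ(i) < σ(i+1)). -/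
/-!
Stanley's proof. For `y` in the unit cube let `x` be the vector of fractional parts of the partial
sums `y₀ + ⋯ + yᵢ`. Off a null set the `xᵢ` are distinct and lie in `(0, 1)`, so `x` lies in the
order simplex of exactly one permutation `τ`; the integer parts of the partial sums then count the
ascents of `τ` before each index, whence `∑ yᵢ = x_{n-1} + asc τ`. So, up to a null set, the slab
`k - 1 ≤ ∑ yᵢ ≤ k` is the disjoint union, over the permutations with `k - 1` ascents, of affine
images of determinant one of these simplices, each of which has volume `1 / n!`.
-/

open scoped Classical in
/-- The number of ascents of a permutation `σ` of `{0, 1, …, n-1}`: the number of indices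
`0 ≤ i < n-1` with `σ(i) < σ(i+1)`. -/
noncomputable def ascentCount (n : ℕ) (σ : Equiv.Perm (Fin n)) : ℕ :=
  ((Finset.univ : Finset (Fin n)).filter fun i : Fin n =>
    ∃ h : i.val + 1 < n, σ i < σ ⟨i.val + 1, h⟩).card

open scoped Classical in
/-- The Eulerian number `A(r, s)`: the number of permutations of a linearly ordered
`r`-element set with exactly `s` ascents. -/
noncomputable def eulerianNumber (r s : ℕ) : ℕ :=
  ((Finset.univ : Finset (Equiv.Perm (Fin r))).filter fun σ => ascentCount r σ = s).card

open MeasureTheory Finset Function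
open scoped ENNReal Nat

theorem addHaar_preimage_singleton_eq_zero {E : Type*} [NormedAddCommGroup E] [NormedSpace ℝ E]
    [MeasurableSpace E] [BorelSpace E] [FiniteDimensional ℝ E] (μ : Measure E)
    [μ.IsAddHaarMeasure] {f : E →ₗ[ℝ] ℝ} (hf : f ≠ 0) (c : ℝ) : μ (f ⁻¹' {c}) = 0 := by
  obtain ⟨u, hu⟩ : ∃ u, f u = c := by
    obtain ⟨v, hv⟩ : ∃ v, f v ≠ 0 := by simpa [LinearMap.ext_iff] using hf
    exact ⟨(c / f v) • v, by simp [hv]⟩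
  have hker : f ⁻¹' {c} = (fun z => z + -u) ⁻¹' (LinearMap.ker f) := by
    ext z
    simp [← sub_eq_add_neg, hu, sub_eq_zero]
  rw [hker, measure_preimage_add_right]
  exact Measure.addHaar_submodule μ _ (by rwa [Ne, LinearMap.ker_eq_top])

theorem ae_forall_ne_intCast {E : Type*} [NormedAddCommGroup E] [NormedSpace ℝ E]
    [MeasurableSpace E] [BorelSpace E] [FiniteDimensional ℝ E] (μ : Measure E)
    [μ.IsAddHaarMeasure] {f : E →ₗ[ℝ] ℝ} (hf : f ≠ 0) : ∀ᵐ z ∂μ, ∀ m : ℤ, f z ≠ m :=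
  ae_all_iff.2 fun m => ae_iff.2 <| by
    simp only [ne_eq, not_not]
    exact addHaar_preimage_singleton_eq_zero μ hf m

theorem ae_fract_ne_zero_and_injective (n : ℕ) :
    ∀ᵐ z : Fin n → ℝ, (∀ i, Int.fract (z i) ≠ 0) ∧ Injective fun i => Int.fract (z i) := by
  have hproj (i : Fin n) : (LinearMap.proj i : (Fin n → ℝ) →ₗ[ℝ] ℝ) ≠ 0 := by
    intro h
    simpa using LinearMap.congr_fun h (Pi.single i 1)
  have hdiff : ∀ᵐ z : Fin n → ℝ, ∀ i j, i ≠ j → ∀ m : ℤ, z i - z j ≠ m := by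
    refine ae_all_iff.2 fun i => ae_all_iff.2 fun j => ?_
    by_cases hij : i = j
    · exact .of_forall fun _ h => absurd hij h
    have hf : (LinearMap.proj i : (Fin n → ℝ) →ₗ[ℝ] ℝ) - LinearMap.proj j ≠ 0 := by
      intro h
      simpa [Pi.single_apply, hij] using LinearMap.congr_fun h (Pi.single i 1)
    filter_upwards [ae_forall_ne_intCast volume hf] with z hz using fun _ => by simpa using hz
  filter_upwards [ae_all_iff.2 fun i => ae_forall_ne_intCast volume (hproj i), hdiff]
    with z hz hz'
  refine ⟨fun i h => ?_, fun i j h => ?_⟩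
  · obtain ⟨m, hm⟩ := Int.fract_eq_zero_iff.1 h
    exact hz i m (by simp [hm])
  · by_contra hij
    obtain ⟨m, hm⟩ := Int.fract_eq_fract.1 h
    exact hz' i j hij m hm

theorem mem_Ioo_of_fract_ne_zero {a : ℝ} (ha : a ∈ Set.Icc 0 1) (h : Int.fract a ≠ 0) :
    a ∈ Set.Ioo 0 1 := by
  refine ⟨ha.1.lt_of_ne ?_, ha.2.lt_of_ne ?_⟩ <;> rintro rfl <;> simp at h

theorem sub_add_ite_mem_Ioo {a b : ℝ} (ha : a ∈ Set.Ico 0 1) (hb : b ∈ Set.Ico 0 1)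
    (hab : a ≠ b) : b - a + (if b < a then 1 else 0) ∈ Set.Ioo 0 1 := by
  obtain ⟨ha0, ha1⟩ := ha
  obtain ⟨hb0, hb1⟩ := hb
  rcases hab.lt_or_gt with h | h
  · rw [if_neg h.not_gt]
    constructor <;> linarith
  · rw [if_pos h]
    constructor <;> linarith

theorem intCast_eq_ite_of_sub_add_mem_Icc {a b : ℝ} (ha : a ∈ Set.Ico 0 1)
    (hb : b ∈ Set.Ico 0 1) (hab : a ≠ b) {k : ℤ} (h : b - a + k ∈ Set.Icc 0 1) :
    (k : ℝ) = if b < a then 1 else 0 := by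
  obtain ⟨ha0, ha1⟩ := ha
  obtain ⟨hb0, hb1⟩ := hb
  obtain ⟨h0, h1⟩ := h
  rcases hab.lt_or_gt with hlt | hlt
  · have hk0 : (-1 : ℤ) < k := by exact_mod_cast (by linarith : (-1 : ℝ) < k)
    have hk1 : k < 1 := by exact_mod_cast (by linarith : (k : ℝ) < 1)
    rw [if_neg hlt.not_gt, show k = 0 by omega, Int.cast_zero]
  · have hk0 : 0 < k := by exact_mod_cast (by linarith : (0 : ℝ) < k)
    have hk1 : k < 2 := by exact_mod_cast (by linarith : (k : ℝ) < 2)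
    rw [if_pos hlt, show k = 1 by omega, Int.cast_one]

namespace Hypersimplex

variable {n m : ℕ}

def partialSums : (Fin n → ℝ) →ₗ[ℝ] Fin n → ℝ :=
  Matrix.toLin' (Matrix.of fun i j => if j ≤ i then 1 else 0)

theorem partialSums_apply (w : Fin n → ℝ) (i : Fin n) :
    partialSums w i = ∑ j with j ≤ i, w j := by
  simp [partialSums, Matrix.mulVec, dotProduct, Finset.sum_filter]

theorem det_partialSums : LinearMap.det (partialSums (n := n)) = 1 := by
  rw [partialSums, LinearMap.det_toLin', Matrix.det_of_isLowerTriangular]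
  · simp
  · intro i j (hij : i < j)
    simp [not_le.2 hij]

theorem partialSums_zero (w : Fin (m + 1) → ℝ) : partialSums w 0 = w 0 := by
  simp [partialSums_apply, Finset.sum_filter]

theorem partialSums_succ (w : Fin (m + 1) → ℝ) (i : Fin m) :
    partialSums w i.succ = partialSums w i.castSucc + w i.succ := by
  have hIic : univ.filter (· ≤ i.succ) = insert i.succ (univ.filter (· ≤ i.castSucc)) := by
    ext j
    rw [mem_insert, mem_filter, mem_filter, Fin.le_castSucc_iff, le_iff_eq_or_lt]
    simp
  rw [partialSums_apply, partialSums_apply, hIic, sum_insert (by simp), add_comm]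

theorem sum_eq_partialSums_last (w : Fin (m + 1) → ℝ) :
    ∑ i, w i = partialSums w (Fin.last m) := by
  simp [partialSums_apply, Fin.le_last]

theorem partialSums_eq_iff {w x : Fin (m + 1) → ℝ} :
    partialSums w = x ↔ w 0 = x 0 ∧ ∀ i : Fin m, w i.succ = x i.succ - x i.castSucc := by
  constructor
  · rintro rfl
    exact ⟨(partialSums_zero w).symm, fun i => by rw [partialSums_succ]; ring⟩
  · rintro ⟨h0, hsucc⟩
    funext i
    induction i using Fin.induction with
    | zero => rw [partialSums_zero, h0]
    | succ i ih => rw [partialSums_succ, ih, hsucc]; ring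

-- Decreasing along `τ⁻¹`, so that the descents of `x` are exactly the ascents of `τ`.
def orderSimplex (τ : Equiv.Perm (Fin n)) : Set (Fin n → ℝ) :=
  {x | (∀ i, x i ∈ Set.Ioo 0 1) ∧ StrictAnti (x ∘ τ.symm)}

theorem measurableSet_orderSimplex (τ : Equiv.Perm (Fin n)) :
    MeasurableSet (orderSimplex τ) := by
  have hτ : orderSimplex τ = (⋂ i, (fun x => x i) ⁻¹' Set.Ioo 0 1) ∩
      ⋂ a, ⋂ b, ⋂ (_ : a < b), {x | x (τ.symm b) < x (τ.symm a)} := by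
    ext x
    simp [orderSimplex, StrictAnti]
  rw [hτ]
  exact .inter (.iInter fun i => measurable_pi_apply i measurableSet_Ioo)
    (.iInter fun a => .iInter fun b => .iInter fun _ =>
      measurableSet_lt (measurable_pi_apply _) (measurable_pi_apply _))

theorem volume_orderSimplex_eq_volume_orderSimplex_one (τ : Equiv.Perm (Fin n)) :
    volume (orderSimplex τ) = volume (orderSimplex (1 : Equiv.Perm (Fin n))) := by
  have hτ : orderSimplex τ = MeasurableEquiv.arrowCongr' τ (.refl ℝ) ⁻¹' orderSimplex 1 := by
    ext x
    simp only [orderSimplex, Set.mem_preimage]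
    exact and_congr τ.symm.forall_congr_right.symm Iff.rfl
  rw [hτ, (volume_preserving_arrowCongr' τ (.refl ℝ) (.id volume)).measure_preimage
    (measurableSet_orderSimplex 1).nullMeasurableSet]

theorem lt_iff_of_mem_orderSimplex {τ : Equiv.Perm (Fin n)} {x : Fin n → ℝ}
    (hx : x ∈ orderSimplex τ) (a b : Fin n) : x a < x b ↔ τ b < τ a := by
  have hanti : StrictAnti (x ∘ τ.symm) := hx.2
  simpa using hanti.lt_iff_gt (a := τ a) (b := τ b)

theorem injective_of_mem_orderSimplex {τ : Equiv.Perm (Fin n)} {x : Fin n → ℝ}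
    (hx : x ∈ orderSimplex τ) : Injective x := by
  have hx' : x = (x ∘ τ.symm) ∘ τ := by ext; simp
  exact hx' ▸ hx.2.injective.comp τ.injective

theorem symm_eq_sort_of_mem_orderSimplex {τ : Equiv.Perm (Fin n)} {x : Fin n → ℝ}
    (hx : x ∈ orderSimplex τ) : τ.symm = Tuple.sort (OrderDual.toDual ∘ x) := by
  have hmono : StrictMono (OrderDual.toDual ∘ x ∘ τ.symm) := strictMono_toDual_comp_iff.2 hx.2
  exact Tuple.eq_sort_iff.2 ⟨hmono.monotone, fun i j hij h => absurd h (hmono hij).ne⟩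

theorem eq_of_mem_orderSimplex {τ τ' : Equiv.Perm (Fin n)} {x : Fin n → ℝ}
    (hx : x ∈ orderSimplex τ) (hx' : x ∈ orderSimplex τ') : τ = τ' :=
  Equiv.symm_bijective.injective
    ((symm_eq_sort_of_mem_orderSimplex hx).trans (symm_eq_sort_of_mem_orderSimplex hx').symm)

theorem pairwise_disjoint_orderSimplex : Pairwise (Disjoint on orderSimplex (n := n)) :=
  fun _ _ hne => Set.disjoint_left.2 fun _ hx hx' => hne (eq_of_mem_orderSimplex hx hx')

theorem exists_mem_orderSimplex {x : Fin n → ℝ} (hx : ∀ i, x i ∈ Set.Ioo 0 1)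
    (hinj : Injective x) : ∃ τ, x ∈ orderSimplex τ := by
  refine ⟨(Tuple.sort (OrderDual.toDual ∘ x)).symm, hx, ?_⟩
  rw [Equiv.symm_symm]
  have hanti : Antitone (x ∘ Tuple.sort (OrderDual.toDual ∘ x)) :=
    monotone_toDual_comp_iff.1 (Tuple.monotone_sort (OrderDual.toDual ∘ x))
  exact hanti.strictAnti_of_injective (hinj.comp (Equiv.injective _))

theorem volume_orderSimplex (τ : Equiv.Perm (Fin n)) :
    volume (orderSimplex τ) = ((n ! : ℕ) : ℝ≥0∞)⁻¹ := by
  have hunion : (⋃ σ, orderSimplex σ) =ᵐ[volume] (Set.Icc 0 1 : Set (Fin n → ℝ)) := by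
    refine (LE.le.eventuallyLE ?_).antisymm ?_
    · exact Set.iUnion_subset fun σ x hx => ⟨fun i => (hx.1 i).1.le, fun i => (hx.1 i).2.le⟩
    filter_upwards [ae_fract_ne_zero_and_injective n] with x hfract hx
    have hx01 (i : Fin n) : x i ∈ Set.Ioo 0 1 :=
      mem_Ioo_of_fract_ne_zero ⟨hx.1 i, hx.2 i⟩ (hfract.1 i)
    have hfx : (fun i => Int.fract (x i)) = x :=
      funext fun i => Int.fract_eq_self.2 ⟨(hx01 i).1.le, (hx01 i).2⟩
    exact Set.mem_iUnion.2 (exists_mem_orderSimplex hx01 (hfx ▸ hfract.2))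
  have hsum : (n ! : ℝ≥0∞) * volume (orderSimplex (1 : Equiv.Perm (Fin n))) = 1 :=
    calc (n ! : ℝ≥0∞) * volume (orderSimplex (1 : Equiv.Perm (Fin n)))
        = ∑ σ, volume (orderSimplex σ) := by
          rw [sum_congr rfl fun σ _ => volume_orderSimplex_eq_volume_orderSimplex_one σ,
            sum_const, card_univ, Fintype.card_perm, Fintype.card_fin, nsmul_eq_mul]
      _ = volume (⋃ σ, orderSimplex σ) :=
          ((measure_iUnion pairwise_disjoint_orderSimplex measurableSet_orderSimplex).trans
            (tsum_fintype _)).symm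
      _ = 1 := by
          rw [measure_congr hunion, Real.volume_Icc_pi]
          simp
  rw [volume_orderSimplex_eq_volume_orderSimplex_one]
  exact ENNReal.eq_inv_of_mul_eq_one_left (by rwa [mul_comm] at hsum)

def ascentIndicator (τ : Equiv.Perm (Fin (m + 1))) : Fin (m + 1) → ℕ :=
  Fin.cons 0 fun i => if τ i.castSucc < τ i.succ then 1 else 0

theorem sum_ascentIndicator (τ : Equiv.Perm (Fin (m + 1))) :
    ∑ i, ascentIndicator τ i = ascentCount (m + 1) τ := by
  rw [ascentIndicator, Fin.sum_cons, zero_add, ascentCount, card_filter, Fin.sum_univ_castSucc]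
  simp [Fin.succ]

/-- The image of `orderSimplex τ` under Stanley's map
`x ↦ (x₀, x₁ - x₀ + [x₁ < x₀], …, x_m - x_{m-1} + [x_m < x_{m-1}])`. -/
def stanleySimplex (τ : Equiv.Perm (Fin (m + 1))) : Set (Fin (m + 1) → ℝ) :=
  {y | partialSums (y - fun i => (ascentIndicator τ i : ℝ)) ∈ orderSimplex τ}

theorem measurableSet_stanleySimplex (τ : Equiv.Perm (Fin (m + 1))) :
    MeasurableSet (stanleySimplex τ) :=
  (measurableSet_orderSimplex τ).preimage
    (partialSums.continuous_of_finiteDimensional.measurable.comp (measurable_id.sub_const _))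

theorem volume_stanleySimplex (τ : Equiv.Perm (Fin (m + 1))) :
    volume (stanleySimplex τ) = ((m + 1)! : ℝ≥0∞)⁻¹ := by
  have hτ : stanleySimplex τ = (fun y => y + -fun i => (ascentIndicator τ i : ℝ)) ⁻¹'
      (partialSums ⁻¹' orderSimplex τ) := by
    ext y
    simp [stanleySimplex, sub_eq_add_neg]
  rw [hτ, measure_preimage_add_right,
    Measure.addHaar_preimage_linearMap _ (by simp [det_partialSums]), det_partialSums,
    volume_orderSimplex]
  simp

theorem partialSums_sub_ascentIndicator_eq_iff {τ : Equiv.Perm (Fin (m + 1))}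
    {x y : Fin (m + 1) → ℝ} (hx : x ∈ orderSimplex τ) :
    partialSums (y - fun i => (ascentIndicator τ i : ℝ)) = x ↔ y 0 = x 0 ∧ ∀ i : Fin m,
      y i.succ = x i.succ - x i.castSucc + if x i.succ < x i.castSucc then 1 else 0 := by
  simp only [partialSums_eq_iff, Pi.sub_apply, ascentIndicator, Fin.cons_zero, Fin.cons_succ,
    lt_iff_of_mem_orderSimplex hx, Nat.cast_zero, sub_zero, Nat.cast_ite, Nat.cast_one,
    sub_eq_iff_eq_add]

theorem mem_Ioo_of_mem_stanleySimplex {τ : Equiv.Perm (Fin (m + 1))} {y : Fin (m + 1) → ℝ}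
    (hy : y ∈ stanleySimplex τ) (i : Fin (m + 1)) : y i ∈ Set.Ioo 0 1 := by
  obtain ⟨h0, hsucc⟩ := (partialSums_sub_ascentIndicator_eq_iff hy).1 rfl
  cases i using Fin.cases with
  | zero => exact h0 ▸ hy.1 0
  | succ i =>
    rw [hsucc]
    exact sub_add_ite_mem_Ioo (Set.Ioo_subset_Ico_self (hy.1 _)) (Set.Ioo_subset_Ico_self (hy.1 _))
      ((injective_of_mem_orderSimplex hy).ne Fin.castSucc_lt_succ.ne)

theorem sum_eq_partialSums_sub_ascentIndicator_last_add (τ : Equiv.Perm (Fin (m + 1)))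
    (y : Fin (m + 1) → ℝ) :
    ∑ i, y i = partialSums (y - fun i => (ascentIndicator τ i : ℝ)) (Fin.last m) +
      ascentCount (m + 1) τ := by
  rw [← sum_eq_partialSums_last, ← sum_ascentIndicator, Nat.cast_sum, ← sum_add_distrib]
  simp

theorem fract_partialSums_mem_orderSimplex {τ : Equiv.Perm (Fin (m + 1))} {y : Fin (m + 1) → ℝ}
    (hy : y ∈ stanleySimplex τ) : (fun i => Int.fract (partialSums y i)) ∈ orderSimplex τ := by
  have hx : partialSums (y - fun i => (ascentIndicator τ i : ℝ)) ∈ orderSimplex τ := hy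
  convert hx using 1
  funext i
  have hy' : partialSums y i = partialSums (y - fun i => (ascentIndicator τ i : ℝ)) i +
      ((∑ j with j ≤ i, ascentIndicator τ j : ℕ) : ℝ) := by
    simp only [partialSums_apply, Pi.sub_apply, sum_sub_distrib]
    push_cast
    ring
  rw [hy', Int.fract_add_natCast, Int.fract_eq_self]
  exact ⟨(hx.1 i).1.le, (hx.1 i).2⟩

theorem pairwise_disjoint_stanleySimplex : Pairwise (Disjoint on stanleySimplex (m := m)) :=
  fun _ _ hne => Set.disjoint_left.2 fun _ hy hy' => hne
    (eq_of_mem_orderSimplex (fract_partialSums_mem_orderSimplex hy)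
      (fract_partialSums_mem_orderSimplex hy'))

theorem exists_mem_stanleySimplex {y : Fin (m + 1) → ℝ} (hy : ∀ i, y i ∈ Set.Icc 0 1)
    (hfract : ∀ i, Int.fract (partialSums y i) ≠ 0)
    (hinj : Injective fun i => Int.fract (partialSums y i)) : ∃ τ, y ∈ stanleySimplex τ := by
  set x := fun i => Int.fract (partialSums y i)
  have hx01 (i : Fin (m + 1)) : x i ∈ Set.Ioo 0 1 :=
    ⟨(Int.fract_nonneg _).lt_of_ne' (hfract i), Int.fract_lt_one _⟩
  obtain ⟨τ, hτ⟩ := exists_mem_orderSimplex hx01 hinj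
  refine ⟨τ, show _ ∈ orderSimplex τ from ?_⟩
  convert hτ
  refine (partialSums_sub_ascentIndicator_eq_iff hτ).2 ⟨?_, fun i => ?_⟩
  · have h0 := mem_Ioo_of_fract_ne_zero (hy 0) (partialSums_zero y ▸ hfract 0)
    simp [x, partialSums_zero, Int.fract_eq_self.2 ⟨h0.1.le, h0.2⟩]
  · have hk : y i.succ = x i.succ - x i.castSucc +
        ((⌊partialSums y i.succ⌋ - ⌊partialSums y i.castSucc⌋ : ℤ) : ℝ) := by
      simp only [x, Int.fract, partialSums_succ]
      push_cast
      ring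
    rw [hk, intCast_eq_ite_of_sub_add_mem_Icc (Set.Ioo_subset_Ico_self (hx01 _))
      (Set.Ioo_subset_Ico_self (hx01 _)) (hinj.ne Fin.castSucc_lt_succ.ne) (hk ▸ hy i.succ)]

def slab (n : ℕ) (k : ℝ) : Set (Fin n → ℝ) :=
  {x | (∀ i, 0 ≤ x i ∧ x i ≤ 1) ∧ k - 1 ≤ ∑ i, x i ∧ ∑ i, x i ≤ k}

theorem mem_slab_iff_of_mem_stanleySimplex {k : ℕ} (hk : 1 ≤ k) {τ : Equiv.Perm (Fin (m + 1))}
    {y : Fin (m + 1) → ℝ} (hy : y ∈ stanleySimplex τ) :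
    y ∈ slab (m + 1) k ↔ ascentCount (m + 1) τ = k - 1 := by
  have hx := hy.1 (Fin.last m)
  have hsum := sum_eq_partialSums_sub_ascentIndicator_last_add τ y
  constructor
  · rintro ⟨-, hlo, hhi⟩
    have h1 : k < ascentCount (m + 1) τ + 2 := by
      exact_mod_cast (show (k : ℝ) < ascentCount (m + 1) τ + 2 by linarith [hx.2])
    have h2 : ascentCount (m + 1) τ < k := by
      exact_mod_cast (show (ascentCount (m + 1) τ : ℝ) < k by linarith [hx.1])
    omega
  · intro h
    have hk' : ((k - 1 : ℕ) : ℝ) = k - 1 := by push_cast [hk]; ring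
    refine ⟨fun i => ⟨(mem_Ioo_of_mem_stanleySimplex hy i).1.le,
      (mem_Ioo_of_mem_stanleySimplex hy i).2.le⟩, ?_, ?_⟩ <;>
    · rw [hsum, h, hk']
      linarith [hx.1, hx.2]

theorem volume_slab {k : ℕ} (hk : 1 ≤ k) :
    volume (slab (m + 1) k) = eulerianNumber (m + 1) (k - 1) * ((m + 1)! : ℝ≥0∞)⁻¹ := by
  set A := (univ : Finset (Equiv.Perm (Fin (m + 1)))).filter
    fun τ => ascentCount (m + 1) τ = k - 1
  have hS : slab (m + 1) k =ᵐ[volume] ⋃ τ ∈ A, stanleySimplex τ := by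
    refine Filter.EventuallyLE.antisymm ?_ (LE.le.eventuallyLE ?_)
    · filter_upwards [(Measure.LinearMap.quasiMeasurePreserving volume partialSums
        (by simp [det_partialSums])).ae (ae_fract_ne_zero_and_injective (m + 1))]
        with y ⟨hfract, hinj⟩ hy
      obtain ⟨τ, hτ⟩ := exists_mem_stanleySimplex (fun i => hy.1 i) hfract hinj
      exact Set.mem_biUnion
        (mem_filter.2 ⟨mem_univ _, (mem_slab_iff_of_mem_stanleySimplex hk hτ).1 hy⟩) hτ
    · exact Set.iUnion₂_subset fun τ hτ y hy =>
        (mem_slab_iff_of_mem_stanleySimplex hk hy).2 (mem_filter.1 hτ).2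
  rw [measure_congr hS, measure_biUnion_finset (pairwise_disjoint_stanleySimplex.set_pairwise _)
    fun τ _ => measurableSet_stanleySimplex τ, sum_congr rfl fun τ _ => volume_stanleySimplex τ,
    sum_const, nsmul_eq_mul]
  rfl

end Hypersimplex

theorem stmt14_general (n k : ℕ) (hn : 1 ≤ n) (hk1 : 1 ≤ k) :
    MeasureTheory.volume {x : Fin n → ℝ |
        (∀ i, 0 ≤ x i ∧ x i ≤ 1) ∧ (k : ℝ) - 1 ≤ ∑ i, x i ∧ ∑ i, x i ≤ k} =
      ENNReal.ofReal ((eulerianNumber n (k - 1) : ℝ) / (n.factorial : ℝ)) := by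
  obtain ⟨m, rfl⟩ : ∃ m, n = m + 1 := ⟨n - 1, by omega⟩
  rw [← Hypersimplex.slab, Hypersimplex.volume_slab hk1, ENNReal.ofReal_div_of_pos (by positivity),
    ENNReal.ofReal_natCast, ENNReal.ofReal_natCast, div_eq_mul_inv]

/-- Laplace's theorem: the Lebesgue volume of the slab
`{x ∈ [0,1]^n : k-1 ≤ ∑ xᵢ ≤ k}` of the unit cube (the `k`-th hypersimplex slab) equals
`A(n, k-1)/n!`, where `A` is the Eulerian number. -/
theorem stmt14 (n k : ℕ) (hn : 1 ≤ n) (hk1 : 1 ≤ k) (hkn : k ≤ n) :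
    MeasureTheory.volume {x : Fin n → ℝ |
        (∀ i, 0 ≤ x i ∧ x i ≤ 1) ∧ (k : ℝ) - 1 ≤ ∑ i, x i ∧ ∑ i, x i ≤ k} =
      ENNReal.ofReal ((eulerianNumber n (k - 1) : ℝ) / (n.factorial : ℝ)) :=
  stmt14_general n k hn hk1
end

section
/- Let m ≥ 1 and let p_{jk} ∈ ℂ for 0 ≤ j < k ≤ m. Suppose: (1) (Plücker relations) p_{il}·p_{jk} − p_{ik}·p_{jl} + p_{ij}·p_{kl} = 0 for all 0 ≤ i < j < k < l ≤ m; and (2) there are positive real numbers c_{jk} > 0 such that for every integer w, ∑_{0≤j<k≤m, j+k=w} c_{jk}·p_{jk} = 0. Then p_{jk} = 0 for all 0 ≤ j < k ≤ m. -/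
/-!
Suppose some row of `p` is nonzero and let `ℓ` be the first one, with `p ℓ k₀ ≠ 0`. By induction
on the weight `w`, every `p a b` with `ℓ ≤ a` and `a + b = w` vanishes: for `ℓ < a`, the entries
`p ℓ a` and `p ℓ b` have smaller weight, so a Plücker relation through the row `ℓ` reduces to
`p ℓ k₀ * p a b = 0`; after that `p ℓ (w - ℓ)` is the only term left in the linear relation of
weight `w`. In particular `p ℓ k₀ = 0`, a contradiction.
-/

variable {R : Type*} [CommRing R] {n : ℕ}

def PluckerRelations (p : Fin n → Fin n → R) : Prop :=
  ∀ i j k l : Fin n, i < j → j < k → k < l →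
    p i l * p j k - p i k * p j l + p i j * p k l = 0

def weightForm (c p : Fin n → Fin n → R) (w : ℕ) : R :=
  ∑ j : Fin n, ∑ k : Fin n, if j < k ∧ (j : ℕ) + (k : ℕ) = w then c j k * p j k else 0

theorem PluckerRelations.mul_eq_zero_of_eq_zero {p : Fin n → Fin n → R}
    (hpl : PluckerRelations p) {b s j k : Fin n} (hbs : b < s) (hbj : b < j) (hjk : j < k)
    (hj : p b j = 0) (hk : p b k = 0) : p b s * p j k = 0 := by
  rcases lt_trichotomy s j with hsj | rfl | hjs
  · linear_combination hpl b s j k hbs hsj hjk - p s j * hk + p s k * hj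
  · simp [hj]
  rcases lt_trichotomy s k with hsk | rfl | hks
  · linear_combination -hpl b j s k hbj hjs hsk + p j s * hk + p s k * hj
  · simp [hk]
  · linear_combination hpl b j k s hbj hjk hks + p j s * hk - p k s * hj

theorem eq_zero_of_weightForm_eq_zero [NoZeroDivisors R] {c p : Fin n → Fin n → R} {a b : Fin n}
    (hab : a < b) (hc : c a b ≠ 0) (hform : weightForm c p (a + b) = 0)
    (hothers : ∀ j k : Fin n, j < k → (j : ℕ) + k = a + b → j ≠ a → p j k = 0) :
    p a b = 0 := by
  have hsum : weightForm c p (a + b) = c a b * p a b := by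
    rw [weightForm, Finset.sum_eq_single a, Finset.sum_eq_single b, if_pos ⟨hab, rfl⟩]
    · intro k _ hkb
      refine if_neg fun h => hkb (Fin.ext ?_)
      omega
    · simp
    · intro j _ hja
      refine Finset.sum_eq_zero fun k _ => ?_
      split_ifs with h
      · rw [hothers j k h.1 h.2 hja, mul_zero]
      · rfl
    · simp
  rw [hsum] at hform
  exact (mul_eq_zero.mp hform).resolve_left hc

namespace PluckerRelations

variable [IsDomain R] {c p : Fin n → Fin n → R} (hpl : PluckerRelations p)
  (hc : ∀ j k, j < k → c j k ≠ 0) (hlin : ∀ w, weightForm c p w = 0)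
include hpl hc hlin

theorem row_eq_zero (ℓ : Fin n) (hlow : ∀ j k, j < ℓ → j < k → p j k = 0) :
    ∀ k, ℓ < k → p ℓ k = 0 := by
  intro k₀ hk₀
  by_contra hne
  suffices h : ∀ w : ℕ, ∀ a b : Fin n, ℓ ≤ a → a < b → (a : ℕ) + b = w → p a b = 0 from
    hne (h _ ℓ k₀ le_rfl hk₀ rfl)
  intro w
  induction w using Nat.strong_induction_on with
  | _ w ih =>
  have hinterior : ∀ a b : Fin n, ℓ < a → a < b → (a : ℕ) + b = w → p a b = 0 := by
    intro a b hℓa hab hw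
    have hℓa' : (ℓ : ℕ) < a := hℓa
    have hab' : (a : ℕ) < b := hab
    have hℓb : ℓ < b := hℓa.trans hab
    have hprod := hpl.mul_eq_zero_of_eq_zero hk₀ hℓa hab
      (ih _ (by omega) ℓ a le_rfl hℓa rfl) (ih _ (by omega) ℓ b le_rfl hℓb rfl)
    exact (mul_eq_zero.mp hprod).resolve_left hne
  intro a b hℓa hab hw
  rcases hℓa.lt_or_eq with hℓa | rfl
  · exact hinterior a b hℓa hab hw
  subst hw
  refine eq_zero_of_weightForm_eq_zero hab (hc _ _ hab) (hlin _) fun j k hjk hw hjℓ => ?_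
  rcases hjℓ.lt_or_gt with hjℓ | hℓj
  · exact hlow j k hjℓ hjk
  · exact hinterior j k hℓj hjk hw

theorem eq_zero : ∀ j k, j < k → p j k = 0 := by
  intro j
  induction j using WellFoundedLT.induction with
  | _ ℓ ih => exact hpl.row_eq_zero hc hlin ℓ fun j k hjℓ hjk => ih j hjℓ k hjk

end PluckerRelations

theorem stmt16_general (m : ℕ) (p : Fin (m + 1) → Fin (m + 1) → ℂ)
    (c : Fin (m + 1) → Fin (m + 1) → ℝ) (hc : ∀ j k, j < k → 0 < c j k)
    (hpl : ∀ i j k l : Fin (m + 1), i < j → j < k → k < l →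
      p i l * p j k - p i k * p j l + p i j * p k l = 0)
    (hlin : ∀ w : ℕ, (∑ j : Fin (m + 1), ∑ k : Fin (m + 1),
      if j < k ∧ (j : ℕ) + (k : ℕ) = w then (c j k : ℂ) * p j k else 0) = 0) :
    ∀ j k, j < k → p j k = 0 :=
  PluckerRelations.eq_zero (c := fun j k => (c j k : ℂ)) hpl
    (fun j k hjk => Complex.ofReal_ne_zero.mpr (hc j k hjk).ne') hlin

/-- If complex numbers `p_{jk}` (`0 ≤ j < k ≤ m`) satisfy the three-term Plücker relations
and, for some positive reals `c_{jk}`, the linear relations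
`∑_{j+k=w} c_{jk} p_{jk} = 0` for every `w`, then all `p_{jk}` vanish. -/
theorem stmt16 (m : ℕ) (hm : 1 ≤ m) (p : Fin (m + 1) → Fin (m + 1) → ℂ)
    (c : Fin (m + 1) → Fin (m + 1) → ℝ) (hc : ∀ j k, j < k → 0 < c j k)
    (hpl : ∀ i j k l : Fin (m + 1), i < j → j < k → k < l →
      p i l * p j k - p i k * p j l + p i j * p k l = 0)
    (hlin : ∀ w : ℕ, (∑ j : Fin (m + 1), ∑ k : Fin (m + 1),
      if j < k ∧ (j : ℕ) + (k : ℕ) = w then (c j k : ℂ) * p j k else 0) = 0) :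
    ∀ j k, j < k → p j k = 0 :=
  stmt16_general m p c hc hpl hlin
end

section
/- Let a_1, …, a_n ∈ ℝ^c be points whose affine span is all of ℝ^c. Then the map μ : ℝ^c → ℝ^c defined by μ(τ) = (∑_{i=1}^n exp(−⟨τ, a_i⟩)·a_i)/(∑_{i=1}^n exp(−⟨τ, a_i⟩)) is a bijection from ℝ^c onto the interior of the convex hull of {a_1, …, a_n}. -/
/-!
The map is `τ ↦` the barycentre of the `a i` with positive weights `exp (-⟪τ, a i⟫)`, so it lands
in the interior of the hull. For `b` in that interior, `μ τ = b` says exactly that `τ` is a critical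
point of `H_b τ = ∑ i, exp ⟪τ, b - a i⟫`. Since `b` is interior, `⟪τ, b - a i⟫ ≥ ε ‖τ‖` for some
`i`, so `H_b` is coercive and has a minimiser: this gives surjectivity. Injectivity is strict
convexity of `H_b` along the segment joining two critical points, which only uses that the
`b - a i` are not all orthogonal to a nonzero vector, i.e. that the `a i` affinely span.
-/

open scoped RealInnerProductSpace

open Finset Filter Real

variable {ι E : Type*} [NormedAddCommGroup E] [InnerProductSpace ℝ E]

theorem nonempty_of_interior_convexHull_range_nonempty {a : ι → E}
    (h : (interior (convexHull ℝ (Set.range a))).Nonempty) : Nonempty ι :=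
  Set.range_nonempty_iff_nonempty.1 (convexHull_nonempty_iff.1 (h.mono interior_subset))

/-- If `x` were not interior, a Hahn–Banach functional `f` with `f < f x` on the interior would
satisfy `f (a i) ≤ f x` for all `i`; positivity of the weights forces equality, and then `f` is at
least `f x` on the whole hull. -/
theorem centerMass_mem_interior_convexHull [Fintype ι] {a : ι → E}
    (hint : (interior (convexHull ℝ (Set.range a))).Nonempty) {w : ι → ℝ} (hw : ∀ i, 0 < w i) :
    univ.centerMass w a ∈ interior (convexHull ℝ (Set.range a)) := by
  have := nonempty_of_interior_convexHull_range_nonempty hint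
  set x := univ.centerMass w a
  have hconv := convex_convexHull ℝ (Set.range a)
  by_contra hx
  obtain ⟨f, hf⟩ := geometric_hahn_banach_open_point hconv.interior isOpen_interior hx
  have hle : ∀ i, f (a i) ≤ f x := by
    have hsub : closure (interior (convexHull ℝ (Set.range a))) ⊆ {p | f p ≤ f x} :=
      (isClosed_le f.continuous continuous_const).closure_subset_iff.2 fun p hp => (hf p hp).le
    intro i
    refine hsub ?_
    rw [hconv.closure_interior_eq_closure_of_nonempty_interior hint]
    exact subset_closure (subset_convexHull ℝ _ ⟨i, rfl⟩)
  have hW : 0 < ∑ i, w i := sum_pos (fun i _ => hw i) univ_nonempty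
  have hsum : ∑ i, w i * (f x - f (a i)) = 0 := by
    have hfx : (∑ i, w i) * f x = ∑ i, w i * f (a i) := by
      simp only [x, Finset.centerMass, map_smul, map_sum, smul_eq_mul]
      field_simp
    simpa only [mul_sub, sum_sub_distrib, ← sum_mul, sub_eq_zero] using hfx
  have heq : ∀ i, f (a i) = f x := fun i => by
    have hi := (sum_eq_zero_iff_of_nonneg fun j _ =>
      mul_nonneg (hw j).le (sub_nonneg.2 (hle j))).1 hsum i (mem_univ i)
    exact (sub_eq_zero.1 ((mul_eq_zero.1 hi).resolve_left (hw i).ne')).symm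
  obtain ⟨y, hy⟩ := hint
  obtain ⟨_, ⟨i, rfl⟩, hi⟩ := (f.toLinearMap.concaveOn hconv).exists_le_of_mem_convexHull
    (subset_convexHull ℝ _) (interior_subset hy)
  simp only [ContinuousLinearMap.coe_coe] at hi
  linarith [heq i, hf y hy]

theorem eq_zero_of_forall_inner_sub_eq_zero {a : ι → E} (hspan : affineSpan ℝ (Set.range a) = ⊤)
    {b v : E} (h : ∀ i, ⟪v, b - a i⟫ = 0) : v = 0 := by
  have hker : vectorSpan ℝ (Set.range a) ≤ LinearMap.ker (innerₛₗ ℝ v) := by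
    refine Submodule.span_le.2 ?_
    rintro _ ⟨_, ⟨i, rfl⟩, _, ⟨j, rfl⟩, rfl⟩
    have : a i -ᵥ a j = (b - a j) - (b - a i) := by rw [vsub_eq_sub]; abel
    show ⟪v, a i -ᵥ a j⟫ = 0
    rw [this, inner_sub_right, h, h, sub_zero]
  rw [AffineSubspace.vectorSpan_eq_top_of_affineSpan_eq_top ℝ E E hspan] at hker
  exact inner_self_eq_zero.1 (hker Submodule.mem_top)

theorem exists_mul_norm_le_inner_sub {a : ι → E} {b : E}
    (hb : b ∈ interior (convexHull ℝ (Set.range a))) :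
    ∃ ε > 0, ∀ τ : E, ∃ i, ε * ‖τ‖ ≤ ⟪τ, b - a i⟫ := by
  obtain ⟨ε, hε, hball⟩ := Metric.nhds_basis_closedBall.mem_iff.1 (mem_interior_iff_mem_nhds.1 hb)
  refine ⟨ε, hε, fun τ => ?_⟩
  -- for `τ = 0` the junk value `ε / 0 = 0` gives `q = b`, and both computations below still hold
  set q := b - (ε / ‖τ‖) • τ
  have hq : q ∈ convexHull ℝ (Set.range a) := hball <| by
    rw [Metric.mem_closedBall, dist_eq_norm, sub_sub_cancel_left, norm_neg, norm_smul,
      Real.norm_of_nonneg (by positivity), div_mul_eq_mul_div, mul_div_assoc]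
    exact mul_le_of_le_one_right hε.le (div_self_le_one _)
  obtain ⟨_, ⟨i, rfl⟩, hi⟩ := ((innerₛₗ ℝ τ).concaveOn (convex_convexHull ℝ _))
    |>.exists_le_of_mem_convexHull (subset_convexHull ℝ _) hq
  refine ⟨i, ?_⟩
  have hτq : ⟪τ, q⟫ = ⟪τ, b⟫ - ε * ‖τ‖ := by
    rw [inner_sub_right, real_inner_smul_right, real_inner_self_eq_norm_mul_norm,
      div_mul_eq_mul_div, mul_div_assoc, mul_self_div_self]
  simp only [innerₛₗ_apply_apply] at hi
  rw [inner_sub_right]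
  linarith

theorem hasFDerivAt_sum_exp_inner [Fintype ι] (u : ι → E) (τ : E) :
    HasFDerivAt (fun σ => ∑ i, exp ⟪σ, u i⟫) (∑ i, exp ⟪τ, u i⟫ • innerSL ℝ (u i)) τ := by
  refine HasFDerivAt.fun_sum fun i _ => HasFDerivAt.exp ?_
  convert (innerSL ℝ (u i)).hasFDerivAt using 1
  ext σ
  exact real_inner_comm _ _

theorem tendsto_sum_exp_inner_cocompact [Fintype ι] [FiniteDimensional ℝ E] {u : ι → E}
    {ε : ℝ} (hε : 0 < ε) (h : ∀ τ : E, ∃ i, ε * ‖τ‖ ≤ ⟪τ, u i⟫) :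
    Tendsto (fun τ => ∑ i, exp ⟪τ, u i⟫) (cocompact E) atTop := by
  refine tendsto_atTop_mono (fun τ => ?_) (tendsto_norm_cocompact_atTop.const_mul_atTop hε)
  obtain ⟨i, hi⟩ := h τ
  calc ε * ‖τ‖ ≤ ⟪τ, u i⟫ := hi
    _ ≤ exp ⟪τ, u i⟫ := (add_one_le_exp _).trans' (le_add_of_nonneg_right zero_le_one)
    _ ≤ ∑ j, exp ⟪τ, u j⟫ :=
      single_le_sum (f := fun j => exp ⟪τ, u j⟫) (fun j _ => (exp_pos _).le) (mem_univ i)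

theorem exists_sum_exp_inner_smul_eq_zero [Fintype ι] [FiniteDimensional ℝ E] {u : ι → E} {ε : ℝ}
    (hε : 0 < ε) (h : ∀ τ : E, ∃ i, ε * ‖τ‖ ≤ ⟪τ, u i⟫) :
    ∃ τ, ∑ i, exp ⟪τ, u i⟫ • u i = 0 := by
  have hcont : Continuous fun τ : E => ∑ i, exp ⟪τ, u i⟫ := by fun_prop
  obtain ⟨τ, hτ⟩ := hcont.exists_forall_le (tendsto_sum_exp_inner_cocompact hε h)
  have hmin : IsLocalMin (fun σ : E => ∑ i, exp ⟪σ, u i⟫) τ := Eventually.of_forall hτ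
  have hcrit := hmin.hasFDerivAt_eq_zero (hasFDerivAt_sum_exp_inner u τ)
  refine ⟨τ, ?_⟩
  set z := ∑ i, exp ⟪τ, u i⟫ • u i
  have hzz : ⟪z, z⟫ = 0 := by
    simpa only [_root_.sum_apply, smul_apply, innerSL_apply_apply, smul_eq_mul,
      ← real_inner_smul_left, ← sum_inner, zero_apply]
      using congrArg (fun L : E →L[ℝ] ℝ => L z) hcrit
  exact inner_self_eq_zero.1 hzz

theorem mul_exp_sub_one_pos {x : ℝ} (hx : x ≠ 0) : 0 < x * (exp x - 1) := by
  rcases hx.lt_or_gt with hx | hx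
  · exact mul_pos_of_neg_of_neg hx (sub_neg.2 (exp_lt_one_iff.2 hx))
  · exact mul_pos hx (sub_pos.2 (one_lt_exp_iff.2 hx))

theorem mul_exp_sub_one_nonneg (x : ℝ) : 0 ≤ x * (exp x - 1) := by
  rcases eq_or_ne x 0 with rfl | hx
  · simp
  · exact (mul_exp_sub_one_pos hx).le

/-- Testing both critical-point equations against `v = σ - τ` and subtracting gives
`∑ i, exp ⟪τ, u i⟫ * (dᵢ * (exp dᵢ - 1)) = 0` with `dᵢ = ⟪v, u i⟫`, a sum of nonnegative terms
that vanish only when `dᵢ = 0`. -/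
theorem eq_of_sum_exp_inner_smul_eq_zero [Fintype ι] {u : ι → E}
    (hu : ∀ v, (∀ i, ⟪v, u i⟫ = 0) → v = 0) {τ σ : E}
    (hτ : ∑ i, exp ⟪τ, u i⟫ • u i = 0) (hσ : ∑ i, exp ⟪σ, u i⟫ • u i = 0) :
    τ = σ := by
  set v := σ - τ
  have hinner : ∀ ρ : E, ∑ i, exp ⟪ρ, u i⟫ • u i = 0 → ∑ i, exp ⟪ρ, u i⟫ * ⟪v, u i⟫ = 0 :=
    fun ρ hρ => by simpa [inner_sum, real_inner_smul_right] using congrArg (⟪v, ·⟫) hρ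
  have hσ' : σ = τ + v := (add_sub_cancel τ σ).symm
  have hsum : ∑ i, exp ⟪τ, u i⟫ * (⟪v, u i⟫ * (exp ⟪v, u i⟫ - 1)) = 0 := by
    have h1 := hinner τ hτ
    have h2 := hinner σ hσ
    simp only [hσ', inner_add_left, exp_add] at h2
    rw [← sub_eq_zero.2 (h2.trans h1.symm), ← sum_sub_distrib]
    exact sum_congr rfl fun i _ => by ring
  have hterm := (sum_eq_zero_iff_of_nonneg fun i _ =>
    mul_nonneg (exp_pos _).le (mul_exp_sub_one_nonneg _)).1 hsum
  have hv : v = 0 := hu v fun i => by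
    by_contra hi
    exact (mul_pos (exp_pos _) (mul_exp_sub_one_pos hi)).ne' (hterm i (mem_univ i))
  exact (sub_eq_zero.1 hv).symm

noncomputable def momentMap [Fintype ι] (a : ι → E) (τ : E) : E :=
  univ.centerMass (fun i => exp (-⟪τ, a i⟫)) a

theorem momentMap_eq_iff [Fintype ι] [Nonempty ι] {a : ι → E} {τ b : E} :
    momentMap a τ = b ↔ ∑ i, exp ⟪τ, b - a i⟫ • (b - a i) = 0 := by
  rw [momentMap, Finset.centerMass]
  set p := fun i => exp (-⟪τ, a i⟫)
  have hP : 0 < ∑ i, p i := sum_pos (fun i _ => exp_pos _) univ_nonempty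
  have hsplit : ∑ i, exp ⟪τ, b - a i⟫ • (b - a i) =
      exp ⟪τ, b⟫ • ((∑ i, p i) • b - ∑ i, p i • a i) := by
    rw [sum_smul, ← sum_sub_distrib, smul_sum]
    refine sum_congr rfl fun i _ => ?_
    rw [inner_sub_right, sub_eq_add_neg, exp_add, mul_smul, smul_sub]
  rw [hsplit, smul_eq_zero, or_iff_right (exp_pos _).ne', sub_eq_zero, inv_smul_eq_iff₀ hP.ne',
    eq_comm]

/-- Moment-map bijection for discrete exponential families: if the points
`a₁, …, a_n ∈ ℝ^c` affinely span `ℝ^c`, then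
`μ(τ) = (∑ᵢ exp(-⟨τ,aᵢ⟩) • aᵢ) / (∑ᵢ exp(-⟨τ,aᵢ⟩))` is a bijection from `ℝ^c` onto the
interior of the convex hull of `{a₁, …, a_n}`. -/
theorem stmt18 {n c : ℕ} (a : Fin n → EuclideanSpace ℝ (Fin c))
    (hspan : affineSpan ℝ (Set.range a) = ⊤)
    (μ : EuclideanSpace ℝ (Fin c) → EuclideanSpace ℝ (Fin c))
    (hμ : ∀ τ, μ τ = (∑ i, Real.exp (-⟪τ, a i⟫))⁻¹ •
      ∑ i, Real.exp (-⟪τ, a i⟫) • a i) :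
    Set.BijOn μ Set.univ (interior (convexHull ℝ (Set.range a))) := by
  obtain rfl : μ = momentMap a := funext hμ
  have hint := interior_convexHull_nonempty_iff_affineSpan_eq_top.2 hspan
  have : Nonempty (Fin n) := nonempty_of_interior_convexHull_range_nonempty hint
  refine ⟨fun τ _ => centerMass_mem_interior_convexHull hint fun i => exp_pos _, ?_, ?_⟩
  · intro τ _ σ _ hτσ
    exact eq_of_sum_exp_inner_smul_eq_zero (fun v => eq_zero_of_forall_inner_sub_eq_zero hspan)
      (momentMap_eq_iff.1 rfl) (momentMap_eq_iff.1 hτσ.symm)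
  · intro b hb
    obtain ⟨ε, hε, hbound⟩ := exists_mul_norm_le_inner_sub hb
    obtain ⟨τ, hτ⟩ := exists_sum_exp_inner_smul_eq_zero hε hbound
    exact ⟨τ, trivial, momentMap_eq_iff.2 hτ⟩
end
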